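/- arXiv:1912.12448 — 2 statements merged into one kernel-verified Lean document; each statement's English description precedes it below -/
import Mathlib

section
/- Let A ∈ ℝ^{n×n}, C ∈ ℝ^{p×n}, let f : ℝⁿ → ℝⁿ be Lipschitz with constant β ≥ 0, and suppose there exist a symmetric positive definite P ∈ ℝ^{n×n}, Y ∈ ℝ^{n×p}, and κ > 0 such that the block matrix [[AᵀP + PA + κβ²I − YC − CᵀYᵀ, P], [P, −κI]] ⪯ 0. Let L = P⁻¹Y. Then for any solutions x(t), x̂(t) of ẋ = Ax + f(x) + Bu and the observer dynamics, the error e = x − x̂ satisfying ė = (A − LC)e − (f(x) − f(x̂)) admits V(e) = eᵀPe as a Lyapunov function: d/dt V(e(t)) ≤ 0 along trajectories. -/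
/-!
Along the error dynamics, `d/dt (eᵀ P e) = 2 ((A - LC) e - w)ᵀ P e` with `w = f(x) - f(x̂)`.
Since `P L = Y`, this equals the quadratic form of the LMI block matrix at `(e, -w)`, which is
`≤ 0`, plus the S-procedure term `κ (|w|² - β² |e|²)`, which is `≤ 0` by the Lipschitz bound.
-/

open Matrix

theorem HasDerivAt.dotProduct {𝕜 ι : Type*} [NontriviallyNormedField 𝕜] [Fintype ι]
    {f g : 𝕜 → ι → 𝕜} {f' g' : ι → 𝕜} {t : 𝕜}
    (hf : HasDerivAt f f' t) (hg : HasDerivAt g g' t) :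
    HasDerivAt (fun s => f s ⬝ᵥ g s) (f' ⬝ᵥ g t + f t ⬝ᵥ g') t := by
  have h := HasDerivAt.fun_sum (u := Finset.univ) fun i _ =>
    (hasDerivAt_pi.1 hf i).fun_mul (hasDerivAt_pi.1 hg i)
  rwa [Finset.sum_add_distrib] at h

theorem HasDerivAt.mulVec {𝕜 ι ι' : Type*} [NontriviallyNormedField 𝕜] [Fintype ι']
    (M : Matrix ι ι' 𝕜) {g : 𝕜 → ι' → 𝕜} {g' : ι' → 𝕜} {t : 𝕜}
    (hg : HasDerivAt g g' t) :
    HasDerivAt (fun s => M *ᵥ g s) (M *ᵥ g') t :=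
  hasDerivAt_pi.2 fun i => HasDerivAt.fun_sum fun j _ => (hasDerivAt_pi.1 hg j).const_mul (M i j)

theorem Real.le_sq_mul_of_sqrt_le_mul_sqrt {a b β : ℝ} (ha : 0 ≤ a) (hb : 0 ≤ b)
    (h : √a ≤ β * √b) : a ≤ β ^ 2 * b :=
  calc a = √a ^ 2 := (Real.sq_sqrt ha).symm
    _ ≤ (β * √b) ^ 2 := pow_le_pow_left₀ (Real.sqrt_nonneg a) h 2
    _ = β ^ 2 * b := by rw [mul_pow, Real.sq_sqrt hb]

section ObserverLMI

variable {R ι ι' : Type*} [Fintype ι] [Fintype ι'] [DecidableEq ι]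

def observerLMIMatrix [CommRing R] (A : Matrix ι ι R) (C : Matrix ι' ι R) (P : Matrix ι ι R)
    (Y : Matrix ι ι' R) (κ β : R) : Matrix (ι ⊕ ι) (ι ⊕ ι) R :=
  fromBlocks (Aᵀ * P + P * A + (κ * β ^ 2) • 1 - Y * C - Cᵀ * Yᵀ) P P (-κ • 1)

theorem observerLMIMatrix_quadForm [CommRing R] (A : Matrix ι ι R) (C : Matrix ι' ι R)
    {P : Matrix ι ι R} {Y L : Matrix ι ι' R} (κ β : R) (hPL : P * L = Y) (hP : Pᵀ = P)
    (v w : ι → R) :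
    Sum.elim v (-w) ⬝ᵥ (observerLMIMatrix A C P Y κ β *ᵥ Sum.elim v (-w)) =
      ((A - L * C) *ᵥ v - w) ⬝ᵥ (P *ᵥ v) + v ⬝ᵥ (P *ᵥ ((A - L * C) *ᵥ v - w))
        + κ * β ^ 2 * (v ⬝ᵥ v) - κ * (w ⬝ᵥ w) := by
  have hYC : Y * C = P * (L * C) := by rw [← hPL, Matrix.mul_assoc]
  have hCY : Cᵀ * Yᵀ = (L * C)ᵀ * P := by
    rw [← hPL, transpose_mul, transpose_mul, hP, Matrix.mul_assoc]
  have transpose_adj : ∀ (M : Matrix ι ι R) (a b : ι → R), (M *ᵥ a) ⬝ᵥ b = a ⬝ᵥ (Mᵀ *ᵥ b) :=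
    fun M a b => by rw [dotProduct_comm, dotProduct_mulVec, ← mulVec_transpose, dotProduct_comm]
  rw [observerLMIMatrix, fromBlocks_mulVec, sumElim_dotProduct_sumElim, hYC, hCY]
  -- keep `L * C` opaque, so that `transpose_adj` only meets square matrices
  generalize L * C = K
  simp only [sub_mulVec, add_mulVec, mulVec_sub, dotProduct_add, dotProduct_sub,
    sub_dotProduct, neg_dotProduct, dotProduct_neg, mulVec_neg, smul_mulVec,
    one_mulVec, dotProduct_smul, smul_eq_mul, ← mulVec_mulVec, transpose_adj,
    Sum.elim_comp_inl, Sum.elim_comp_inr]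
  ring

theorem observerLMIMatrix_error_quadForm_nonpos {A : Matrix ι ι ℝ} {C : Matrix ι' ι ℝ}
    {P : Matrix ι ι ℝ} {Y L : Matrix ι ι' ℝ} {κ β : ℝ}
    (hLMI : (-observerLMIMatrix A C P Y κ β).PosSemidef) (hκ : 0 ≤ κ)
    (hPL : P * L = Y) (hP : Pᵀ = P) {v w : ι → ℝ} (hw : w ⬝ᵥ w ≤ β ^ 2 * (v ⬝ᵥ v)) :
    ((A - L * C) *ᵥ v - w) ⬝ᵥ (P *ᵥ v) + v ⬝ᵥ (P *ᵥ ((A - L * C) *ᵥ v - w)) ≤ 0 := by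
  have hQ : Sum.elim v (-w) ⬝ᵥ (observerLMIMatrix A C P Y κ β *ᵥ Sum.elim v (-w)) ≤ 0 := by
    simpa [neg_mulVec] using hLMI.dotProduct_mulVec_nonneg (Sum.elim v (-w))
  have hS : 0 ≤ κ * (β ^ 2 * (v ⬝ᵥ v) - w ⬝ᵥ w) := mul_nonneg hκ (sub_nonneg.2 hw)
  rw [observerLMIMatrix_quadForm A C κ β hPL hP] at hQ
  linarith

end ObserverLMI

theorem observer_lyapunov_decrease_general {n p : ℕ}
    (A : Matrix (Fin n) (Fin n) ℝ)
    (C : Matrix (Fin p) (Fin n) ℝ)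
    (f : (Fin n → ℝ) → (Fin n → ℝ)) (β : ℝ)
    (hlip : ∀ a b : Fin n → ℝ,
      Real.sqrt ((f a - f b) ⬝ᵥ (f a - f b)) ≤ β * Real.sqrt ((a - b) ⬝ᵥ (a - b)))
    (P : Matrix (Fin n) (Fin n) ℝ) (Y : Matrix (Fin n) (Fin p) ℝ) (κ : ℝ)
    (hP : P.PosDef) (hκ : 0 < κ)
    (hLMI : (-(Matrix.fromBlocks
        (Aᵀ * P + P * A + (κ * β ^ 2) • (1 : Matrix (Fin n) (Fin n) ℝ)
          - Y * C - Cᵀ * Yᵀ) P P (-κ • (1 : Matrix (Fin n) (Fin n) ℝ)))).PosSemidef)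
    (L : Matrix (Fin n) (Fin p) ℝ) (hL : L = P⁻¹ * Y)
    (x xh e : ℝ → (Fin n → ℝ))
    (he : ∀ t, e t = x t - xh t)
    (herr : ∀ t, HasDerivAt e ((A - L * C) *ᵥ e t - (f (x t) - f (xh t))) t) :
    ∀ t, deriv (fun s => e s ⬝ᵥ (P *ᵥ e s)) t ≤ 0 := by
  intro t
  have hPsymm : Pᵀ = P := by simpa [conjTranspose_eq_transpose_of_trivial] using hP.isHermitian.eq
  have hPL : P * L = Y := by rw [hL, mul_nonsing_inv_cancel_left _ _ hP.det_pos.ne'.isUnit]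
  have hw : (f (x t) - f (xh t)) ⬝ᵥ (f (x t) - f (xh t)) ≤ β ^ 2 * (e t ⬝ᵥ e t) := by
    refine Real.le_sq_mul_of_sqrt_le_mul_sqrt ?_ ?_ (he t ▸ hlip (x t) (xh t)) <;>
      exact Finset.sum_nonneg fun i _ => mul_self_nonneg _
  rw [((herr t).dotProduct ((herr t).mulVec P)).deriv]
  exact observerLMIMatrix_error_quadForm_nonpos hLMI hκ.le hPL hPsymm hw

/-- Lyapunov decrease for the Luenberger observer error dynamics of a
Lipschitz nonlinear system under the observer LMI. -/
theorem observer_lyapunov_decrease {n p m : ℕ}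
    (A : Matrix (Fin n) (Fin n) ℝ) (B : Matrix (Fin n) (Fin m) ℝ)
    (C : Matrix (Fin p) (Fin n) ℝ)
    (f : (Fin n → ℝ) → (Fin n → ℝ)) (β : ℝ) (hβ : 0 ≤ β)
    (hlip : ∀ a b : Fin n → ℝ,
      Real.sqrt ((f a - f b) ⬝ᵥ (f a - f b)) ≤ β * Real.sqrt ((a - b) ⬝ᵥ (a - b)))
    (P : Matrix (Fin n) (Fin n) ℝ) (Y : Matrix (Fin n) (Fin p) ℝ) (κ : ℝ)
    (hP : P.PosDef) (hκ : 0 < κ)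
    (hLMI : (-(Matrix.fromBlocks
        (Aᵀ * P + P * A + (κ * β ^ 2) • (1 : Matrix (Fin n) (Fin n) ℝ)
          - Y * C - Cᵀ * Yᵀ) P P (-κ • (1 : Matrix (Fin n) (Fin n) ℝ)))).PosSemidef)
    (L : Matrix (Fin n) (Fin p) ℝ) (hL : L = P⁻¹ * Y)
    (x xh e : ℝ → (Fin n → ℝ)) (u : ℝ → (Fin m → ℝ))
    (hx : ∀ t, HasDerivAt x (A *ᵥ x t + f (x t) + B *ᵥ u t) t)
    (he : ∀ t, e t = x t - xh t)
    (herr : ∀ t, HasDerivAt e ((A - L * C) *ᵥ e t - (f (x t) - f (xh t))) t) :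
    ∀ t, deriv (fun s => e s ⬝ᵥ (P *ᵥ e s)) t ≤ 0 :=
  observer_lyapunov_decrease_general A C f β hlip P Y κ hP hκ hLMI L hL x xh e he herr
end

section
/- For matrices Y, Q ∈ ℝ^{m×p}, entrywise bounds Y̲ ≤ Y ≤ Ȳ, and γ ∈ {0,1}^p with Γ = diag(γ): the constraint Q = YΓ holds if and only if for every i, j the four inequalities Q_{ij} ≥ Y_{ij} + Ȳ_{ij}(γⱼ − 1), Ȳ_{ij}γⱼ ≥ Q_{ij}, −Q_{ij} ≥ −Y_{ij} + Y̲_{ij}(1 − γⱼ), and Q_{ij} ≥ Y̲_{ij}γⱼ hold. -/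
/-!
The matrix equation is entrywise, `(Y * diagonal γ) i j = Y i j * γ j`. For `γ j = 0` two of the
four inequalities pin `Q i j = 0`, for `γ j = 1` the other two pin `Q i j = Y i j`; in either case
the remaining pair is slack because `Ylow ≤ Y ≤ Ybar`.
-/

theorem mccormick_envelope_exact {R : Type*} [CommRing R] [LinearOrder R] [IsStrictOrderedRing R]
    {y q lo hi g : R} (hlo : lo ≤ y) (hhi : y ≤ hi) (hg : g = 0 ∨ g = 1) :
    q = y * g ↔
      q ≥ y + hi * (g - 1) ∧ hi * g ≥ q ∧ -q ≥ -y + lo * (1 - g) ∧ q ≥ lo * g := by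
  rcases hg with rfl | rfl
  · simp only [mul_zero, zero_sub, mul_neg, mul_one, sub_zero]
    constructor
    · rintro rfl
      refine ⟨?_, ?_, ?_, ?_⟩ <;> linarith
    · rintro ⟨-, hq, -, hq'⟩
      exact le_antisymm hq hq'
  · simp only [mul_one, sub_self, mul_zero, add_zero]
    constructor
    · rintro rfl
      exact ⟨le_rfl, hhi, le_rfl, hlo⟩
    · rintro ⟨hq, -, hq', -⟩
      exact le_antisymm (neg_le_neg_iff.mp hq') hq

/-- Matrix version of the McCormick exactness: Q = YΓ with Γ = diag(γ),
γ binary, and Y entrywise bounded, iff the entrywise McCormick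
inequalities hold. -/
theorem mccormick_matrix_exact {m p : ℕ}
    (Y Q Ylow Ybar : Matrix (Fin m) (Fin p) ℝ) (γ : Fin p → ℝ)
    (hYbounds : ∀ i j, Ylow i j ≤ Y i j ∧ Y i j ≤ Ybar i j)
    (hγ : ∀ j, γ j = 0 ∨ γ j = 1) :
    Q = Y * Matrix.diagonal γ ↔
      ∀ i j, Q i j ≥ Y i j + Ybar i j * (γ j - 1) ∧
             Ybar i j * γ j ≥ Q i j ∧
             -Q i j ≥ -Y i j + Ylow i j * (1 - γ j) ∧
             Q i j ≥ Ylow i j * γ j := by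
  rw [← Matrix.ext_iff]
  simp only [Matrix.mul_diagonal]
  exact forall₂_congr fun i j =>
    mccormick_envelope_exact (hYbounds i j).1 (hYbounds i j).2 (hγ j)
end
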